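/- Let (X_n) be a sequence of nonnegative real random variables adapted to a filtration (F_n) such that sum_{n=0}^infty E[max(E[X_{n+1} - X_n | F_n], 0)] < infinity. Then sum_{n=0}^infty |E[X_{n+1} - X_n | F_n]| < infinity almost surely, and X_n converges almost surely. -/

import Mathlib

open MeasureTheory Filter Topology
open scoped ENNReal NNReal

/-!
Write `X = M + A` with `A n = ∑_{k<n} d k`, `d k = E[X (k+1) - X k | F k]` (Doob decomposition).
Since `|d| = 2 d⁺ - d` and `∑_{k<n} E d k = E X n - E X 0 ≥ -E X 0` by nonnegativity, the bound on
`∑ E d⁺` bounds `∑ E |d|` and `sup E X n`. Hence `A` converges absolutely a.s., while `M` is an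
`L¹`-bounded martingale, which converges a.s. by Doob's theorem.
-/

theorem MeasureTheory.Integrable.eLpNorm_one_eq_ofReal_integral_abs {Ω : Type*}
    {m0 : MeasurableSpace Ω} {μ : Measure Ω} {g : Ω → ℝ} (hg : Integrable g μ) :
    eLpNorm g 1 μ = ENNReal.ofReal (∫ ω, |g ω| ∂μ) := by
  rw [eLpNorm_one_eq_lintegral_enorm, ← ofReal_integral_norm_eq_lintegral_enorm hg]
  rfl

namespace MeasureTheory

variable {Ω : Type*} {m0 : MeasurableSpace Ω} {μ : Measure Ω} {ℱ : Filtration ℕ m0}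
  {f : ℕ → Ω → ℝ}

theorem ae_summable_abs_condExp_sub
    (hsum : ∑' n, eLpNorm (μ[f (n + 1) - f n | ℱ n]) 1 μ ≠ ∞) :
    ∀ᵐ ω ∂μ, Summable fun n => |μ[f (n + 1) - f n | ℱ n] ω| := by
  simpa only [Real.norm_eq_abs] using summable_norm_of_tsum_eLpNorm_ne_top le_rfl
    (fun _ => integrable_condExp.aestronglyMeasurable) hsum

theorem Adapted.exists_ae_tendsto_of_bdd_of_tsum_eLpNorm_condExp_ne_top [IsFiniteMeasure μ]
    (hf : Adapted ℱ f) (hint : ∀ n, Integrable (f n) μ) {R : ℝ≥0}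
    (hbdd : ∀ n, eLpNorm (f n) 1 μ ≤ R)
    (hsum : ∑' n, eLpNorm (μ[f (n + 1) - f n | ℱ n]) 1 μ ≠ ∞) :
    ∀ᵐ ω ∂μ, ∃ c, Tendsto (fun n => f n ω) atTop (𝓝 c) := by
  set V := ∑' n, eLpNorm (μ[f (n + 1) - f n | ℱ n]) 1 μ
  have hmart : Martingale (martingalePart f ℱ μ) ℱ μ :=
    martingale_martingalePart hf.stronglyAdapted hint
  have hmart_bdd : ∀ n, eLpNorm (martingalePart f ℱ μ n) 1 μ ≤ ↑(R + V.toNNReal) := by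
    intro n
    calc eLpNorm (f n - predictablePart f ℱ μ n) 1 μ
        ≤ eLpNorm (f n) 1 μ + eLpNorm (predictablePart f ℱ μ n) 1 μ :=
          eLpNorm_sub_le (hint n).aestronglyMeasurable
            ((stronglyAdapted_predictablePart' n).mono (ℱ.le n)).aestronglyMeasurable le_rfl
      _ ≤ R + V := by
          refine add_le_add (hbdd n) ((eLpNorm_sum_le ?_ le_rfl).trans (ENNReal.sum_le_tsum _))
          exact fun _ _ => integrable_condExp.aestronglyMeasurable
      _ = ↑(R + V.toNNReal) := by rw [ENNReal.coe_add, ENNReal.coe_toNNReal hsum]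
  filter_upwards [hmart.submartingale.exists_ae_tendsto_of_bdd hmart_bdd,
    ae_summable_abs_condExp_sub hsum] with ω ⟨c, hc⟩ hsum_abs
  refine ⟨c + ∑' n, μ[f (n + 1) - f n | ℱ n] ω, ?_⟩
  have hpred : Tendsto (fun n => predictablePart f ℱ μ n ω) atTop
      (𝓝 (∑' n, μ[f (n + 1) - f n | ℱ n] ω)) := by
    simp only [predictablePart, Finset.sum_apply]
    exact hsum_abs.of_abs.hasSum.tendsto_sum_nat
  simpa [martingalePart] using hc.add hpred

theorem sum_range_integral_condExp_sub [SigmaFiniteFiltration μ ℱ]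
    (hint : ∀ n, Integrable (f n) μ) (n : ℕ) :
    ∑ k ∈ Finset.range n, ∫ ω, μ[f (k + 1) - f k | ℱ k] ω ∂μ =
      ∫ ω, f n ω ∂μ - ∫ ω, f 0 ω ∂μ := by
  simp_rw [integral_condExp (ℱ.le _), integral_sub' (hint _) (hint _)]
  exact Finset.sum_range_sub (fun k => ∫ ω, f k ω ∂μ) n

theorem integral_le_integral_zero_add_tsum_integral_max_condExp_sub [SigmaFiniteFiltration μ ℱ]
    (hint : ∀ n, Integrable (f n) μ)
    (hsum : Summable fun n => ∫ ω, max (μ[f (n + 1) - f n | ℱ n] ω) 0 ∂μ) (n : ℕ) :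
    ∫ ω, f n ω ∂μ ≤ ∫ ω, f 0 ω ∂μ + ∑' k, ∫ ω, max (μ[f (k + 1) - f k | ℱ k] ω) 0 ∂μ := by
  have hle : ∑ k ∈ Finset.range n, ∫ ω, μ[f (k + 1) - f k | ℱ k] ω ∂μ ≤
      ∑' k, ∫ ω, max (μ[f (k + 1) - f k | ℱ k] ω) 0 ∂μ :=
    (Finset.sum_le_sum fun k _ => integral_mono integrable_condExp integrable_condExp.pos_part
      fun ω => le_max_left _ _).trans
      (hsum.sum_le_tsum _ fun k _ => integral_nonneg fun ω => le_max_right _ _)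
  linarith [sum_range_integral_condExp_sub (ℱ := ℱ) hint n]

theorem summable_integral_abs_condExp_sub_of_nonneg [SigmaFiniteFiltration μ ℱ]
    (hnonneg : ∀ n ω, 0 ≤ f n ω) (hint : ∀ n, Integrable (f n) μ)
    (hsum : Summable fun n => ∫ ω, max (μ[f (n + 1) - f n | ℱ n] ω) 0 ∂μ) :
    Summable fun n => ∫ ω, |μ[f (n + 1) - f n | ℱ n] ω| ∂μ := by
  refine summable_of_sum_range_le (c := 2 * ∑' k, ∫ ω, max (μ[f (k + 1) - f k | ℱ k] ω) 0 ∂μ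
    + ∫ ω, f 0 ω ∂μ) (fun n => integral_nonneg fun ω => abs_nonneg _) fun n => ?_
  have hpos : ∑ k ∈ Finset.range n, ∫ ω, max (μ[f (k + 1) - f k | ℱ k] ω) 0 ∂μ ≤
      ∑' k, ∫ ω, max (μ[f (k + 1) - f k | ℱ k] ω) 0 ∂μ :=
    hsum.sum_le_tsum _ fun k _ => integral_nonneg fun ω => le_max_right _ _
  simp_rw [integral_abs_eq_two_mul_integral_posPart_sub_integral integrable_condExp,
    Finset.sum_sub_distrib, ← Finset.mul_sum, sum_range_integral_condExp_sub (ℱ := ℱ) hint,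
    PosPart.posPart]
  linarith [(integral_nonneg (hnonneg n) : 0 ≤ ∫ ω, f n ω ∂μ)]

end MeasureTheory

theorem fisk_quasimartingale {Ω : Type*} {m0 : MeasurableSpace Ω}
    {μ : Measure Ω} [IsProbabilityMeasure μ]
    (F : Filtration ℕ m0) (X : ℕ → Ω → ℝ)
    (hadapted : Adapted F X)
    (hnonneg : ∀ n ω, 0 ≤ X n ω)
    (hint : ∀ n, Integrable (X n) μ)
    (hsum : Summable fun n => ∫ ω, max ((μ[X (n + 1) - X n | F n]) ω) 0 ∂μ) :
    ∀ᵐ ω ∂μ,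
      (Summable fun n => |(μ[X (n + 1) - X n | F n]) ω|) ∧
      ∃ l : ℝ, Tendsto (fun n => X n ω) atTop (nhds l) := by
  have hvar : ∑' n, eLpNorm (μ[X (n + 1) - X n | F n]) 1 μ ≠ ∞ := by
    simp_rw [integrable_condExp.eLpNorm_one_eq_ofReal_integral_abs]
    rw [← ENNReal.ofReal_tsum_of_nonneg (fun n => integral_nonneg fun _ => abs_nonneg _)
      (summable_integral_abs_condExp_sub_of_nonneg hnonneg hint hsum)]
    exact ENNReal.ofReal_ne_top
  have hbdd (n : ℕ) : eLpNorm (X n) 1 μ ≤ ↑(∫ ω, X 0 ω ∂μ +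
      ∑' k, ∫ ω, max (μ[X (k + 1) - X k | F k] ω) 0 ∂μ).toNNReal := by
    rw [(hint n).eLpNorm_one_eq_ofReal_integral_abs]
    refine ENNReal.ofReal_le_ofReal ?_
    simpa only [abs_of_nonneg (hnonneg n _)] using
      integral_le_integral_zero_add_tsum_integral_max_condExp_sub hint hsum n
  filter_upwards [ae_summable_abs_condExp_sub hvar,
    hadapted.exists_ae_tendsto_of_bdd_of_tsum_eLpNorm_condExp_ne_top hint hbdd hvar]
    with ω hsum_abs hconv using ⟨hsum_abs, hconv⟩
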